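/- arXiv:1807.10468 — 2 statements merged into one kernel-verified Lean document; each statement's English description precedes it below -/
import Mathlib

section
/- For the game CSG({1,...,N}) with N ≥ 3, let S(1^t) denote the star with a central vertex and t leaves, and let u be its central vertex. Then for all k ≥ 0, the Grundy value of the graph obtained by appending a path of k vertices to u equals the Grundy value of the graph obtained by appending a path of k mod (N+1) vertices to u. In particular, the Grundy sequence in k is purely periodic with period N+1. -/
open SimpleGraph

/-- The minimum excludant of a set of naturals. -/
noncomputable def mex (s : Set ℕ) : ℕ := sInf {n | n ∉ s}

/-- The graph induced on a set of vertices is connected. -/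
def ConnOn {V : Type*} (G : SimpleGraph V) (s : Set V) : Prop := (G.induce s).Connected

/-- A legal move in the connected subtraction game CSG(L) on the graph `G`:
from remaining vertex set `s`, remove the (nonempty) connected set `s \ t` whose
cardinality lies in `L`, leaving `t`, which must be empty or induce a connected graph. -/
def CsgMove {V : Type*} [DecidableEq V] (G : SimpleGraph V) (L : Set ℕ)
    (s t : Finset V) : Prop :=
  t ⊆ s ∧ (s \ t).Nonempty ∧ (s \ t).card ∈ L ∧
    ConnOn G (↑(s \ t) : Set V) ∧ (t = ∅ ∨ ConnOn G (↑t : Set V))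

/-- The Grundy value of the position with remaining vertex set `s` in the game
CSG(L) played on `G`, defined by the mex recursion over all legal moves. -/
noncomputable def csgGrundy {V : Type*} [DecidableEq V] (G : SimpleGraph V) (L : Set ℕ)
    (s : Finset V) : ℕ :=
  mex (Set.range fun t : {t : Finset V // CsgMove G L s t} =>
    have : t.1.card < s.card := by
      obtain ⟨x, hx⟩ := t.2.2.1
      rw [Finset.mem_sdiff] at hx
      exact Finset.card_lt_card ((Finset.ssubset_iff_of_subset t.2.1).2 ⟨x, hx.1, hx.2⟩)
    csgGrundy G L t.1)
termination_by s.card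
decreasing_by exact this

/-- The subdivided star with `t` branches of lengths `l 0, …, l (t-1)` appended
to a central vertex `none`. -/
def subdividedStar {t : ℕ} (l : Fin t → ℕ) :
    SimpleGraph (Option (Σ i : Fin t, Fin (l i))) :=
  SimpleGraph.fromRel fun a b =>
    match a, b with
    | none, some ⟨_, j⟩ => (j : ℕ) = 0
    | some ⟨i, j⟩, some ⟨i', j'⟩ => (i : ℕ) = (i' : ℕ) ∧ (j : ℕ) + 1 = (j' : ℕ)
    | _, _ => False

/-- The graph `G` with a path on `k` new vertices appended at the vertex `u`. -/
def appendPath {V : Type*} (G : SimpleGraph V) (u : V) (k : ℕ) :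
    SimpleGraph (V ⊕ Fin k) :=
  SimpleGraph.fromRel fun a b =>
    match a, b with
    | Sum.inl x, Sum.inl y => G.Adj x y
    | Sum.inl x, Sum.inr j => x = u ∧ (j : ℕ) = 0
    | Sum.inr j, Sum.inr j' => (j : ℕ) + 1 = (j' : ℕ)
    | _, _ => False

open Finset

/-!
Every position that arises from the star with `t` leaves and a path of `k` vertices appended at
its center is either a center carrying `a` leaves and a path of `j` vertices, or a bare path (a
single leaf counting as a path on one vertex); the game on these positions is `StarPos`. Placing
the leaves on level `0`, the center on level `1` and the path vertices on levels `2, 3, …`, two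
vertices are adjacent exactly when their levels differ by one. Hence a vertex set is connected iff
its levels form an interval and it contains the center as soon as it contains a leaf and another
vertex; this identifies the legal moves with those of `StarPos`.

In `StarPos`, a position with `N + 1` vertices has value `0`, and a position with `N + 2` vertices
that can lose a single vertex has value `1`. With these two facts an induction shows that
lengthening the path by `N + 1` vertices keeps every option value of the position and creates
none equal to its own value.
-/

lemma mex_le {s : Set ℕ} {n : ℕ} (h : n ∉ s) : mex s ≤ n := Nat.sInf_le h

lemma mem_of_lt_mex {s : Set ℕ} {n : ℕ} (h : n < mex s) : n ∈ s := by
  by_contra hn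
  exact (mex_le hn).not_gt h

lemma mex_notMem {s : Set ℕ} (h : ∃ n, n ∉ s) : mex s ∉ s := Nat.sInf_mem h

lemma mex_eq {s : Set ℕ} {g : ℕ} (hg : g ∉ s) (hlt : ∀ n < g, n ∈ s) : mex s = g :=
  (mex_le hg).antisymm <| not_lt.1 fun h => mex_notMem ⟨g, hg⟩ (hlt _ h)

lemma mex_eq_of_subset {s s' : Set ℕ} (h : s ⊆ s') (hs : mex s ∉ s') : mex s' = mex s :=
  mex_eq hs fun _ hn => h (mem_of_lt_mex hn)

/-- `star a j` is a center with `a` leaves and a path of `j` vertices appended to it, `path m` is a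
path on `m` vertices. -/
inductive StarPos : Type
  | star (a j : ℕ)
  | path (m : ℕ)

namespace StarPos

def size : StarPos → ℕ
  | star a j => a + j + 1
  | path m => m

/-- The moves of CSG({1,…,N}): `tail` shortens the path, `leaf` removes a leaf, `clear` removes
the center with all leaves and the first `p` path vertices, and `single` removes everything but
one leaf. -/
inductive Move (N : ℕ) : StarPos → StarPos → Prop
  | tail (a j r : ℕ) : 1 ≤ r → r ≤ N → r ≤ j → Move N (star a j) (star a (j - r))
  | leaf (a j : ℕ) : 1 ≤ N → Move N (star (a + 1) j) (star a j)
  | clear (a j p : ℕ) : p ≤ j → a + p + 1 ≤ N → Move N (star a j) (path (j - p))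
  | single (a j : ℕ) : a + 1 + j ≤ N → Move N (star (a + 1) j) (path 1)
  | path (m r : ℕ) : 1 ≤ r → r ≤ N → r ≤ m → Move N (path m) (path (m - r))

variable {N : ℕ}

lemma Move.size_lt {σ τ : StarPos} (h : Move N σ τ) : τ.size < σ.size := by
  cases h <;> simp only [size] <;> omega

lemma Move.size_le_add {σ τ : StarPos} (h : Move N σ τ) : σ.size ≤ τ.size + N := by
  cases h <;> simp only [size] <;> omega

noncomputable def grundy (N : ℕ) (σ : StarPos) : ℕ :=
  mex (Set.range fun τ : {τ : StarPos // Move N σ τ} =>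
    have : τ.1.size < σ.size := τ.2.size_lt
    grundy N τ.1)
termination_by σ.size

lemma grundy_eq_mex (σ : StarPos) : grundy N σ = mex (grundy N '' {τ | Move N σ τ}) := by
  rw [grundy, Set.image_eq_range]
  rfl

lemma grundy_le_size (σ : StarPos) : grundy N σ ≤ σ.size := by
  rw [grundy_eq_mex]
  refine mex_le fun ⟨τ, hτ, he⟩ => ?_
  have := hτ.size_lt
  have := grundy_le_size τ
  omega
termination_by σ.size

lemma grundy_ne_of_move {σ τ : StarPos} (h : Move N σ τ) : grundy N σ ≠ grundy N τ := by
  intro he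
  refine (grundy_eq_mex (N := N) σ ▸ mex_notMem ⟨σ.size, ?_⟩) ⟨τ, h, he.symm⟩
  rintro ⟨τ', hτ', he'⟩
  have := grundy_le_size (N := N) τ'
  have := hτ'.size_lt
  omega

lemma grundy_path (n : ℕ) : grundy N (path n) = n % (N + 1) := by
  induction n using Nat.strong_induction_on with
  | _ n ih =>
  rw [grundy_eq_mex]
  apply mex_eq
  · rintro ⟨_, hτ, he⟩
    cases hτ with
    | path _ r hr hrN hrn =>
      rw [ih _ (by omega)] at he
      have hdvd : N + 1 ∣ r := by
        simpa [Nat.sub_sub_self hrn] using (Nat.modEq_iff_dvd' (Nat.sub_le n r)).1 he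
      have := Nat.le_of_dvd hr hdvd
      omega
  · intro v hv
    have hlt : n % (N + 1) < N + 1 := Nat.mod_lt n (by omega)
    have hle : n % (N + 1) ≤ n := Nat.mod_le n (N + 1)
    refine ⟨_, .path n (n % (N + 1) - v) (by omega) (by omega) (by omega), ?_⟩
    have hdecomp : n - (n % (N + 1) - v) = v + (N + 1) * (n / (N + 1)) := by
      have := Nat.mod_add_div n (N + 1)
      omega
    rw [ih _ (by omega), hdecomp, Nat.add_mul_mod_self_left, Nat.mod_eq_of_lt (by omega)]

lemma move_path_zero {σ : StarPos} (h1 : 1 ≤ σ.size) (hN : σ.size ≤ N) : Move N σ (path 0) := by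
  cases σ with
  | star a j => simpa using Move.clear a j j le_rfl (by simp only [size] at hN; omega)
  | path m => simpa using Move.path m m h1 hN le_rfl

lemma move_path_one {σ : StarPos} (h2 : 2 ≤ σ.size) (hN : σ.size ≤ N) : Move N σ (path 1) := by
  cases σ with
  | star a j =>
    simp only [size] at h2 hN
    cases a with
    | zero =>
      simpa [show j - (j - 1) = 1 by omega] using Move.clear 0 j (j - 1) (by omega) (by omega)
    | succ a => exact Move.single a j (by omega)
  | path m =>
    simp only [size] at h2 hN
    simpa [show m - (m - 1) = 1 by omega] using
      Move.path m (m - 1) (by omega) (by omega) (by omega)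

lemma one_le_grundy {σ : StarPos} (h1 : 1 ≤ σ.size) (hN : σ.size ≤ N) : 1 ≤ grundy N σ := by
  have := grundy_ne_of_move (move_path_zero h1 hN)
  rw [grundy_path, Nat.zero_mod] at this
  omega

lemma two_le_grundy {σ : StarPos} (h2 : 2 ≤ σ.size) (hN : σ.size ≤ N) : 2 ≤ grundy N σ := by
  have h0 := grundy_ne_of_move (move_path_zero (by omega) hN)
  have h1 := grundy_ne_of_move (move_path_one h2 hN)
  rw [grundy_path, Nat.zero_mod] at h0
  rw [grundy_path, Nat.mod_eq_of_lt (by omega)] at h1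
  omega

lemma grundy_eq_zero {σ : StarPos} (h : σ.size = N + 1) : grundy N σ = 0 := by
  rw [grundy_eq_mex]
  refine mex_eq (fun ⟨τ, hτ, he⟩ => ?_) (by omega)
  have := one_le_grundy (N := N) (σ := τ) (by have := hτ.size_le_add; omega)
    (by have := hτ.size_lt; omega)
  omega

lemma grundy_eq_one {σ τ : StarPos} (hσ : σ.size = N + 2) (hτ : Move N σ τ)
    (hτ' : τ.size = N + 1) : grundy N σ = 1 := by
  rw [grundy_eq_mex]
  refine mex_eq (fun ⟨ρ, hρ, he⟩ => ?_) fun v hv => ⟨τ, hτ, by rw [grundy_eq_zero hτ']; omega⟩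
  have := hρ.size_lt
  have := hρ.size_le_add
  rcases Nat.lt_or_ge ρ.size (N + 1) with hlt | hge
  · have := two_le_grundy (N := N) (σ := ρ) (by omega) (by omega)
    omega
  · rw [grundy_eq_zero (by omega)] at he
    omega

section Periodicity

variable {a j : ℕ}

/-- `single` is matched by cutting the path down to `N - a` vertices, leaving a position of size
`N + 2` and value `1`. -/
lemma image_grundy_subset_add_period
    (ih : ∀ a' j', a' + j' < a + j → grundy N (star a' (j' + (N + 1))) = grundy N (star a' j')) :
    grundy N '' {τ | Move N (star a j) τ} ⊆ grundy N '' {τ | Move N (star a (j + (N + 1))) τ} := by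
  rintro _ ⟨τ, hτ, rfl⟩
  cases hτ with
  | tail _ _ r h1 h2 h3 =>
    refine ⟨_, .tail a (j + (N + 1)) r h1 h2 (by omega), ?_⟩
    rw [show j + (N + 1) - r = j - r + (N + 1) by omega, ih a (j - r) (by omega)]
  | leaf a _ hN => exact ⟨_, .leaf a (j + (N + 1)) hN, ih a j (by omega)⟩
  | clear _ _ p hp hpN =>
    refine ⟨_, .clear a (j + (N + 1)) p (by omega) hpN, ?_⟩
    rw [grundy_path, grundy_path, show j + (N + 1) - p = j - p + (N + 1) by omega,
      Nat.add_mod_right]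
  | single a _ hN =>
    refine ⟨_, .tail (a + 1) (j + (N + 1)) (a + 1 + j) (by omega) hN (by omega), ?_⟩
    rw [grundy_path, Nat.mod_eq_of_lt (by omega),
      grundy_eq_one (by simp only [size]; omega) (.tail _ _ 1 le_rfl (by omega) (by omega))
        (by simp only [size]; omega)]

lemma grundy_notMem_image_add_period
    (ih : ∀ a' j', a' + j' < a + j → grundy N (star a' (j' + (N + 1))) = grundy N (star a' j')) :
    grundy N (star a j) ∉ grundy N '' {τ | Move N (star a (j + (N + 1))) τ} := by
  rintro ⟨τ, hτ, he⟩
  cases hτ with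
  | tail _ _ r h1 h2 h3 =>
    have hmove := Move.tail (N := N) a (j + (N + 1 - r)) (N + 1 - r) (by omega) (by omega)
      (by omega)
    rw [Nat.add_sub_cancel] at hmove
    rw [show j + (N + 1) - r = j + (N + 1 - r) by omega] at he
    exact grundy_ne_of_move hmove he
  | leaf a _ hN =>
    rw [ih a j (by omega)] at he
    exact grundy_ne_of_move (.leaf a j hN) he.symm
  | clear _ _ p hp hpN =>
    rw [grundy_path] at he
    rcases le_or_gt p j with hpj | hpj
    · rw [show j + (N + 1) - p = j - p + (N + 1) by omega, Nat.add_mod_right,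
        ← grundy_path] at he
      exact grundy_ne_of_move (.clear a j p hpj hpN) he.symm
    · rw [Nat.mod_eq_of_lt (by omega)] at he
      have := grundy_le_size (N := N) (star a j)
      simp only [size] at this
      omega
  | single a _ hN => omega

end Periodicity

lemma grundy_star_add_period (a j : ℕ) :
    grundy N (star a (j + (N + 1))) = grundy N (star a j) := by
  induction hn : a + j using Nat.strong_induction_on generalizing a j with
  | _ n ih =>
  subst hn
  have ih' := fun a' j' (h : a' + j' < a + j) => ih _ h a' j' rfl
  rw [grundy_eq_mex, grundy_eq_mex (star a j)]
  exact mex_eq_of_subset (image_grundy_subset_add_period ih')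
    (grundy_eq_mex (N := N) (star a j) ▸ grundy_notMem_image_add_period ih')

lemma grundy_star_mod (a j : ℕ) : grundy N (star a j) = grundy N (star a (j % (N + 1))) := by
  conv_lhs => rw [← Nat.mod_add_div j (N + 1)]
  induction j / (N + 1) with
  | zero => rw [mul_zero, add_zero]
  | succ q ih => rw [Nat.mul_succ, ← add_assoc, grundy_star_add_period, ih]

end StarPos

section LevelledGraph

variable {V : Type*} {G : SimpleGraph V} {s : Set V}

lemma connOn_singleton (v : V) : ConnOn G {v} := by
  rw [ConnOn, SimpleGraph.induce_singleton_eq_top]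
  exact SimpleGraph.connected_top

lemma ConnOn.exists_adj (hs : ConnOn G s) {v w : V} (hv : v ∈ s) (hw : w ∈ s) (hvw : v ≠ w) :
    ∃ x ∈ s, G.Adj v x := by
  obtain ⟨p⟩ := hs.preconnected ⟨v, hv⟩ ⟨w, hw⟩
  have hp : ¬ p.Nil := fun h => hvw (congrArg Subtype.val h.eq)
  exact ⟨p.snd.1, p.snd.2, p.adj_snd hp⟩

lemma ConnOn.ordConnected_image (f : V → ℕ) (hf : ∀ u v, G.Adj u v → f v ≤ f u + 1)
    (hs : ConnOn G s) : (f '' s).OrdConnected := by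
  suffices key : ∀ {a b : s} (p : (G.induce s).Walk a b) {m : ℕ}, f a ≤ m → m ≤ f b →
      m ∈ f '' s by
    refine ⟨?_⟩
    rintro _ ⟨x, hx, rfl⟩ _ ⟨z, hz, rfl⟩ m ⟨hxm, hmz⟩
    obtain ⟨p⟩ := hs.preconnected ⟨x, hx⟩ ⟨z, hz⟩
    exact key p hxm hmz
  intro a b p
  induction p with
  | nil => exact fun h1 h2 => ⟨_, Subtype.prop _, le_antisymm h1 h2⟩
  | @cons u w _ hadj p ih =>
    intro m h1 h2
    rcases h1.eq_or_lt with h | h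
    · exact ⟨u, u.2, h⟩
    · exact ih (by have := hf u w hadj; omega) h2

lemma connOn_of_ordConnected_image (f : V → ℕ)
    (hf : ∀ u v, G.Adj u v ↔ f u + 1 = f v ∨ f v + 1 = f u) (hne : s.Nonempty)
    (hs : (f '' s).OrdConnected)
    (hlevel : ∀ v ∈ s, ∀ w ∈ s, v ≠ w → f v = f w → ∃ x ∈ s, G.Adj v x) : ConnOn G s := by
  have adj : ∀ {v w : V} (hv : v ∈ s) (hw : w ∈ s), G.Adj v w →
      (G.induce s).Reachable ⟨v, hv⟩ ⟨w, hw⟩ := fun _ _ h => SimpleGraph.Adj.reachable h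
  have key : ∀ n v (hv : v ∈ s) w (hw : w ∈ s), f v + n = f w →
      (G.induce s).Reachable ⟨v, hv⟩ ⟨w, hw⟩ := by
    intro n
    induction n with
    | zero =>
      intro v hv w hw h
      by_cases hvw : v = w
      · subst hvw
        rfl
      obtain ⟨x, hx, hvx⟩ := hlevel v hv w hw hvw (by omega)
      have hxw : G.Adj x w := (hf x w).2 (by have := (hf v x).1 hvx; omega)
      exact (adj hv hx hvx).trans (adj hx hw hxw)
    | succ n ih =>
      intro v hv w hw h
      obtain ⟨y, hy, hfy⟩ := hs.out ⟨v, hv, rfl⟩ ⟨w, hw, rfl⟩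
        (show f v + 1 ∈ Set.Icc (f v) (f w) from ⟨by omega, by omega⟩)
      exact (adj hv hy ((hf v y).2 (Or.inl hfy.symm))).trans (ih y hy w hw (by omega))
  refine (SimpleGraph.connected_iff _).2 ⟨fun a b => ?_, hne.to_subtype⟩
  rcases le_total (f a) (f b) with h | h
  · exact key _ a a.2 b b.2 (Nat.add_sub_cancel' h)
  · exact (key _ b b.2 a a.2 (Nat.add_sub_cancel' h)).symm

lemma nonempty_of_connOn {s : Finset V} (hs : ConnOn G ↑s) : s.Nonempty :=
  Finset.coe_nonempty.1 (Set.nonempty_coe_sort.1 hs.nonempty)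

lemma ordConnected_image_filter {s : Finset V} (f : V → ℕ) (hs : (f '' ↑s).OrdConnected)
    {p : ℕ → Prop} [DecidablePred p] (hp : {n | p n}.OrdConnected) :
    (f '' ↑(s.filter fun v => p (f v))).OrdConnected := by
  rw [Finset.coe_filter]
  exact (Set.image_inter_preimage f ↑s {n | p n}).symm ▸ hs.inter hp

lemma ordConnected_image_erase [DecidableEq V] {s : Finset V} (f : V → ℕ)
    (hs : (f '' ↑s).OrdConnected) {v : V} (hv : f v = 0) : (f '' ↑(s.erase v)).OrdConnected := by
  refine ⟨?_⟩
  rintro _ ⟨x, hx, rfl⟩ _ ⟨z, hz, rfl⟩ m hm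
  obtain ⟨y, hy, rfl⟩ := hs.out ⟨x, Finset.mem_of_mem_erase hx, rfl⟩
    ⟨z, Finset.mem_of_mem_erase hz, rfl⟩ hm
  by_cases hyv : y = v
  · exact ⟨x, hx, by subst hyv; have := hm.1; omega⟩
  · exact ⟨y, Finset.mem_erase.2 ⟨hyv, hy⟩, rfl⟩

end LevelledGraph

lemma card_filter_sdiff_add_card_filter {α : Type*} [DecidableEq α] {s u : Finset α} (h : u ⊆ s)
    (p : α → Prop) [DecidablePred p] : #((s \ u).filter p) + #(u.filter p) = #(s.filter p) := by
  rw [← Finset.card_union_of_disjoint (Finset.disjoint_filter_filter Finset.sdiff_disjoint),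
    ← Finset.filter_union, Finset.sdiff_union_of_subset h]

section CsgMove

variable {V : Type*} [DecidableEq V] {G : SimpleGraph V} {s u : Finset V}

lemma csgMove_of_connOn {N : ℕ} (hus : u ⊆ s) (hN : #(s \ u) ≤ N) (hd : ConnOn G ↑(s \ u))
    (hu : u = ∅ ∨ ConnOn G ↑u) : CsgMove G (Set.Icc 1 N) s u :=
  have hne := nonempty_of_connOn hd
  ⟨hus, hne, ⟨hne.card_pos, hN⟩, hd, hu⟩

lemma card_lt_card_of_csgMove {L : Set ℕ} (h : CsgMove G L s u) : #u < #s :=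
  Finset.card_lt_card (h.1.ssubset_of_not_subset (Finset.sdiff_nonempty.1 h.2.1))

lemma csgGrundy_eq_mex (G : SimpleGraph V) (L : Set ℕ) (s : Finset V) :
    csgGrundy G L s = mex (csgGrundy G L '' {u | CsgMove G L s u}) := by
  rw [csgGrundy, Set.image_eq_range]
  rfl

end CsgMove

namespace StarWithPath

abbrev Vertex (t k : ℕ) := Option (Σ _ : Fin t, Fin 1) ⊕ Fin k

abbrev graph (t k : ℕ) : SimpleGraph (Vertex t k) :=
  appendPath (subdividedStar fun _ : Fin t => 1) none k

variable {t k : ℕ}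

def center : Vertex t k := .inl none

def level : Vertex t k → ℕ
  | .inl none => 1
  | .inl (some _) => 0
  | .inr x => x + 2

@[simp] lemma level_center : level (center : Vertex t k) = 1 := rfl

lemma adj_iff_level {u v : Vertex t k} :
    (graph t k).Adj u v ↔ level u + 1 = level v ∨ level v + 1 = level u := by
  rcases u with (_ | ⟨i, j⟩) | x <;> rcases v with (_ | ⟨i', j'⟩) | y <;>
    simp [appendPath, subdividedStar, level, Fin.ext_iff, Fin.val_eq_zero]
  omega

lemma level_eq_one_iff {v : Vertex t k} : level v = 1 ↔ v = center := by
  rcases v with (_ | _) | _ <;> simp [level, center]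

lemma eq_of_level_eq {v w : Vertex t k} (hv : 1 ≤ level v) (h : level v = level w) : v = w := by
  rcases v with (_ | _) | x <;> rcases w with (_ | _) | y <;> simp_all [level, Fin.ext_iff]

variable {s : Finset (Vertex t k)}

lemma ordConnected_image_level (hs : ConnOn (graph t k) ↑s) :
    (level '' (s : Set (Vertex t k))).OrdConnected :=
  ConnOn.ordConnected_image level (fun _ _ h => by have := adj_iff_level.1 h; omega) hs

lemma eq_singleton_or_center_mem (hs : ConnOn (graph t k) ↑s) {v : Vertex t k}
    (hv : v ∈ s) (h0 : level v = 0) : s = {v} ∨ center ∈ s := by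
  refine or_iff_not_imp_left.2 fun hne => ?_
  obtain ⟨w, hw, hwv⟩ : ∃ w ∈ s, w ≠ v := by
    by_contra! h
    exact hne (Finset.eq_singleton_iff_unique_mem.2 ⟨hv, h⟩)
  obtain ⟨x, hx, hvx⟩ := hs.exists_adj hv hw hwv.symm
  rw [adj_iff_level, h0] at hvx
  exact (level_eq_one_iff (v := x)).1 (by omega) ▸ hx

lemma connOn_of_ordConnected (hne : s.Nonempty)
    (hs : (level '' (s : Set (Vertex t k))).OrdConnected)
    (hleaf : ∀ v ∈ s, level v = 0 → s = {v} ∨ center ∈ s) : ConnOn (graph t k) ↑s := by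
  refine connOn_of_ordConnected_image level (fun _ _ => adj_iff_level)
    (Finset.coe_nonempty.2 hne) hs fun v hv w hw hvw he => ?_
  rcases Nat.eq_zero_or_pos (level v) with h0 | hpos
  · rcases hleaf v hv h0 with rfl | hc
    · exact absurd (Finset.mem_singleton.1 hw) (Ne.symm hvw)
    · exact ⟨center, hc, adj_iff_level.2 (by rw [level_center, h0]; omega)⟩
  · exact absurd (eq_of_level_eq hpos he) hvw

def leafCount (s : Finset (Vertex t k)) : ℕ := #(s.filter (level · = 0))

def tailCount (s : Finset (Vertex t k)) : ℕ := #(s.filter (2 ≤ level ·))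

def toStarPos (s : Finset (Vertex t k)) : StarPos :=
  if center ∈ s then .star (leafCount s) (tailCount s) else .path #s

lemma card_eq_leafCount_add_tailCount (s : Finset (Vertex t k)) :
    #s = leafCount s + (if center ∈ s then 1 else 0) + tailCount s := by
  have h1 := Finset.card_filter_add_card_filter_not (s := s) (level · = 0)
  have h2 := Finset.card_filter_add_card_filter_not (s := s.filter (¬ level · = 0)) (2 ≤ level ·)
  have hcenter : (s.filter (¬ level · = 0)).filter (¬ 2 ≤ level ·) = s.filter (· = center) := by
    rw [Finset.filter_filter]
    exact Finset.filter_congr fun v _ => by rw [← level_eq_one_iff]; omega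
  have htail : (s.filter (¬ level · = 0)).filter (2 ≤ level ·) = s.filter (2 ≤ level ·) := by
    rw [Finset.filter_filter]
    exact Finset.filter_congr fun v _ => by omega
  rw [hcenter, htail, Finset.filter_eq'] at h2
  unfold leafCount tailCount
  split_ifs at h2 ⊢ <;> simp only [Finset.card_singleton, Finset.card_empty] at h2 <;> omega

lemma leafCount_singleton {v : Vertex t k} (hv : level v = 0) : leafCount {v} = 1 := by
  simp [leafCount, Finset.filter_singleton, hv]

lemma tailCount_singleton {v : Vertex t k} (hv : level v = 0) : tailCount {v} = 0 := by
  simp [tailCount, Finset.filter_singleton, hv]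

lemma exists_level_eq_zero (ha : leafCount s ≠ 0) : ∃ v ∈ s, level v = 0 := by
  obtain ⟨v, hv⟩ := Finset.card_pos.1 (Nat.pos_of_ne_zero ha)
  exact ⟨v, (Finset.mem_filter.1 hv).1, (Finset.mem_filter.1 hv).2⟩

lemma eq_singleton_or_leafCount_eq_zero (hs : s = ∅ ∨ ConnOn (graph t k) ↑s) (hc : center ∉ s) :
    (∃ v, level v = 0 ∧ s = {v}) ∨ leafCount s = 0 := by
  refine or_iff_not_imp_right.2 fun h => ?_
  obtain ⟨v, hv, hv0⟩ := exists_level_eq_zero h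
  rcases hs with rfl | hs
  · simp at hv
  · exact ⟨v, hv0, (eq_singleton_or_center_mem hs hv hv0).resolve_right hc⟩

variable {N : ℕ}

lemma move_toStarPos {u : Finset (Vertex t k)} (hm : CsgMove (graph t k) (Set.Icc 1 N) s u) :
    StarPos.Move N (toStarPos s) (toStarPos u) := by
  obtain ⟨hus, -, ⟨h1, hN⟩, hd, hu⟩ := hm
  have hcard := Finset.card_sdiff_add_card_eq_card hus
  have hL : leafCount (s \ u) + leafCount u = leafCount s :=
    card_filter_sdiff_add_card_filter hus _
  have hT : tailCount (s \ u) + tailCount u = tailCount s :=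
    card_filter_sdiff_add_card_filter hus _
  have hs := card_eq_leafCount_add_tailCount s
  have hu' := card_eq_leafCount_add_tailCount u
  have hd' := card_eq_leafCount_add_tailCount (s \ u)
  unfold toStarPos
  by_cases hcs : center ∈ s
  swap
  · rw [if_neg hcs, if_neg fun h => hcs (hus h)]
    convert StarPos.Move.path (N := N) #s #(s \ u) h1 hN (by omega) using 2
    omega
  by_cases hcu : center ∈ u
  · have hcd : center ∉ s \ u := fun h => (Finset.mem_sdiff.1 h).2 hcu
    rw [if_pos hcs, if_pos hcu]
    rw [if_neg hcd] at hd'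
    rcases eq_singleton_or_leafCount_eq_zero (Or.inr hd) hcd with ⟨v, hv, hdv⟩ | h0
    · rw [hdv, leafCount_singleton hv] at hL
      rw [hdv, tailCount_singleton hv] at hT
      convert StarPos.Move.leaf (N := N) (leafCount u) (tailCount u) (by omega) using 2 <;> omega
    · convert StarPos.Move.tail (N := N) (leafCount s) (tailCount s) #(s \ u) h1 hN (by omega)
        using 2 <;> omega
  · rw [if_pos hcs, if_neg hcu]
    rw [if_pos hcs] at hs
    rw [if_neg hcu] at hu'
    rcases eq_singleton_or_leafCount_eq_zero hu hcu with ⟨v, hv, rfl⟩ | h0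
    · rw [leafCount_singleton hv] at hL
      rw [Finset.card_singleton] at hcard ⊢
      convert StarPos.Move.single (N := N) (leafCount s - 1) (tailCount s) (by omega) using 2
      omega
    · convert StarPos.Move.clear (N := N) (leafCount s) (tailCount s) (tailCount s - #u)
        (by omega) (by omega) using 2
      omega

lemma image_level_eq_Icc (hs : ConnOn (graph t k) ↑s) : ∃ lo hi, s.image level = Icc lo hi := by
  have hne := (nonempty_of_connOn hs).image level
  have hord : (↑(s.image level) : Set ℕ).OrdConnected := by
    rw [Finset.coe_image]
    exact ordConnected_image_level hs
  refine ⟨(s.image level).min' hne, (s.image level).max' hne,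
    Finset.ext fun n => ⟨fun hn => ?_, fun hn => ?_⟩⟩
  · exact Finset.mem_Icc.2 ⟨Finset.min'_le _ _ hn, Finset.le_max' _ _ hn⟩
  · exact hord.out (Finset.min'_mem _ hne) (Finset.max'_mem _ hne) (Finset.mem_Icc.1 hn)

lemma card_filter_level {Q : ℕ → Prop} [DecidablePred Q] (hQ : ∀ n, Q n → 1 ≤ n) :
    #(s.filter fun v => Q (level v)) = #((s.image level).filter Q) := by
  rw [Finset.filter_image, Finset.card_image_of_injOn]
  intro v hv w _ h
  exact eq_of_level_eq (hQ _ (Finset.mem_filter.1 hv).2) h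

lemma card_filter_lt_level {lo hi : ℕ} (hS : s.image level = Icc lo hi) {c : ℕ}
    (hc : lo ≤ c + 1) : #(s.filter (c < level ·)) = hi - c := by
  rw [card_filter_level (fun n h => by omega), hS,
    show (Icc lo hi).filter (c < ·) = Icc (c + 1) hi by ext; simp; omega, Nat.card_Icc]
  omega

lemma tailCount_filter_level_le {lo hi : ℕ} (hS : s.image level = Icc lo hi) (hlo : lo ≤ 2)
    {c : ℕ} (hc : c ≤ hi) : tailCount (s.filter (level · ≤ c)) = c - 1 := by
  rw [tailCount, Finset.filter_filter,
    card_filter_level (Q := fun n => n ≤ c ∧ 2 ≤ n) (fun n h => by omega), hS,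
    show (Icc lo hi).filter (fun n => n ≤ c ∧ 2 ≤ n) = Icc 2 c by ext; simp; omega, Nat.card_Icc]
  omega

lemma leafCount_filter_level_le (c : ℕ) : leafCount (s.filter (level · ≤ c)) = leafCount s := by
  rw [leafCount, leafCount, Finset.filter_filter]
  exact congrArg _ (Finset.filter_congr fun v _ => by omega)

lemma image_level_of_center_mem (hs : ConnOn (graph t k) ↑s) (hc : center ∈ s) :
    ∃ lo ≤ 1, s.image level = Icc lo (tailCount s + 1) := by
  obtain ⟨lo, hi, hS⟩ := image_level_eq_Icc hs
  have hlevel : ∀ v ∈ s, lo ≤ level v ∧ level v ≤ hi := fun v hv =>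
    Finset.mem_Icc.1 (hS ▸ Finset.mem_image_of_mem level hv)
  have h1 := hlevel center hc
  rw [level_center] at h1
  have htail : tailCount s = hi - 1 := by
    have := tailCount_filter_level_le hS (by omega) le_rfl
    rwa [Finset.filter_true_of_mem fun v hv => (hlevel v hv).2] at this
  exact ⟨lo, h1.1, by rw [hS, htail, Nat.sub_add_cancel h1.2]⟩

lemma connOn_filter_lt_level (hs : ConnOn (graph t k) ↑s) (c : ℕ)
    (hne : (s.filter (c < level ·)).Nonempty) : ConnOn (graph t k) ↑(s.filter (c < level ·)) :=
  connOn_of_ordConnected hne (ordConnected_image_filter level (ordConnected_image_level hs)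
    Set.ordConnected_Ioi) fun v hv h0 => by have := (Finset.mem_filter.1 hv).2; omega

lemma connOn_filter_level_le (hs : ConnOn (graph t k) ↑s) {c : ℕ} (hc : center ∈ s → 1 ≤ c)
    (hne : (s.filter (level · ≤ c)).Nonempty) : ConnOn (graph t k) ↑(s.filter (level · ≤ c)) := by
  refine connOn_of_ordConnected hne (ordConnected_image_filter level (ordConnected_image_level hs)
    Set.ordConnected_Iic) fun v hv h0 => ?_
  rcases eq_singleton_or_center_mem hs (Finset.mem_filter.1 hv).1 h0 with hsv | hcs
  · left
    rw [hsv, Finset.filter_singleton, if_pos (by omega)]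
  · exact Or.inr (Finset.mem_filter.2 ⟨hcs, by rw [level_center]; exact hc hcs⟩)

lemma connOn_erase (hs : ConnOn (graph t k) ↑s) (hc : center ∈ s) {v : Vertex t k}
    (hv : level v = 0) : ConnOn (graph t k) ↑(s.erase v) := by
  have hcv : center ∈ s.erase v := Finset.mem_erase.2 ⟨fun h => by simp [← h] at hv, hc⟩
  exact connOn_of_ordConnected ⟨_, hcv⟩ (ordConnected_image_erase level
    (ordConnected_image_level hs) hv) fun _ _ _ => Or.inr hcv

lemma csgMove_filter_level_le (hs : ConnOn (graph t k) ↑s) {c : ℕ} (hc : center ∈ s → 1 ≤ c)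
    (hne : (s.filter (c < level ·)).Nonempty) (hN : #(s.filter (c < level ·)) ≤ N) :
    CsgMove (graph t k) (Set.Icc 1 N) s (s.filter (level · ≤ c)) := by
  have hd : s \ s.filter (level · ≤ c) = s.filter (c < level ·) := by
    rw [← Finset.filter_not]
    simp only [not_le]
  exact csgMove_of_connOn (Finset.filter_subset _ _) (hd ▸ hN)
    (hd ▸ connOn_filter_lt_level hs c hne)
    ((Finset.eq_empty_or_nonempty _).imp_right (connOn_filter_level_le hs hc))

lemma csgMove_filter_lt_level (hs : ConnOn (graph t k) ↑s) (hc : center ∈ s) {c : ℕ}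
    (hc1 : 1 ≤ c) (hN : #(s.filter (level · ≤ c)) ≤ N) :
    CsgMove (graph t k) (Set.Icc 1 N) s (s.filter (c < level ·)) := by
  have hd : s \ s.filter (c < level ·) = s.filter (level · ≤ c) := by
    rw [← Finset.filter_not]
    simp only [not_lt]
  have hcd : center ∈ s.filter (level · ≤ c) := Finset.mem_filter.2 ⟨hc, by rwa [level_center]⟩
  exact csgMove_of_connOn (Finset.filter_subset _ _) (hd ▸ hN)
    (hd ▸ connOn_filter_level_le hs (fun _ => hc1) ⟨_, hcd⟩)
    ((Finset.eq_empty_or_nonempty _).imp_right (connOn_filter_lt_level hs c))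

lemma exists_csgMove_tail (hs : ConnOn (graph t k) ↑s) (hc : center ∈ s) {r : ℕ} (hr : 1 ≤ r)
    (hrN : r ≤ N) (hrj : r ≤ tailCount s) : ∃ u, CsgMove (graph t k) (Set.Icc 1 N) s u ∧
      toStarPos u = .star (leafCount s) (tailCount s - r) := by
  obtain ⟨lo, hlo, hS⟩ := image_level_of_center_mem hs hc
  have hcard : #(s.filter (tailCount s + 1 - r < level ·)) = r := by
    rw [card_filter_lt_level hS (by omega)]
    omega
  have hcu : center ∈ s.filter (level · ≤ tailCount s + 1 - r) :=
    Finset.mem_filter.2 ⟨hc, by rw [level_center]; omega⟩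
  refine ⟨_, csgMove_filter_level_le (c := tailCount s + 1 - r) hs (fun _ => by omega)
    (Finset.card_pos.1 (by omega)) (by omega), ?_⟩
  rw [toStarPos, if_pos hcu, leafCount_filter_level_le, tailCount_filter_level_le hS (by omega)
    (by omega)]
  congr 1
  omega

lemma exists_csgMove_leaf (hs : ConnOn (graph t k) ↑s) (hc : center ∈ s) {a : ℕ}
    (ha : leafCount s = a + 1) (hN : 1 ≤ N) : ∃ u, CsgMove (graph t k) (Set.Icc 1 N) s u ∧
      toStarPos u = .star a (tailCount s) := by
  obtain ⟨v, hv, hv0⟩ := exists_level_eq_zero (s := s) (by omega)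
  have hcu : center ∈ s.erase v := Finset.mem_erase.2 ⟨fun h => by simp [← h] at hv0, hc⟩
  refine ⟨s.erase v, csgMove_of_connOn (Finset.erase_subset v s)
    (by rw [Finset.sdiff_erase_self hv, Finset.card_singleton]; exact hN)
    (by rw [Finset.sdiff_erase_self hv, Finset.coe_singleton]; exact connOn_singleton v)
    (Or.inr (connOn_erase hs hc hv0)), ?_⟩
  rw [toStarPos, if_pos hcu, leafCount, tailCount, Finset.filter_erase, Finset.filter_erase,
    Finset.card_erase_of_mem (Finset.mem_filter.2 ⟨hv, hv0⟩),
    Finset.erase_eq_of_notMem (fun h => by have := (Finset.mem_filter.1 h).2; omega)]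
  exact congrArg₂ _ (by rw [← leafCount, ha]; rfl) rfl

lemma exists_csgMove_clear (hs : ConnOn (graph t k) ↑s) (hc : center ∈ s) {p : ℕ}
    (hp : p ≤ tailCount s) (hpN : leafCount s + p + 1 ≤ N) :
    ∃ u, CsgMove (graph t k) (Set.Icc 1 N) s u ∧ toStarPos u = .path (tailCount s - p) := by
  obtain ⟨lo, hlo, hS⟩ := image_level_of_center_mem hs hc
  have hcd : center ∈ s.filter (level · ≤ p + 1) :=
    Finset.mem_filter.2 ⟨hc, by rw [level_center]; omega⟩
  have hcu : center ∉ s.filter (p + 1 < level ·) := fun h => by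
    have := (Finset.mem_filter.1 h).2
    rw [level_center] at this
    omega
  have hcard := card_eq_leafCount_add_tailCount (s.filter (level · ≤ p + 1))
  rw [if_pos hcd, leafCount_filter_level_le, tailCount_filter_level_le hS (by omega) (by omega)]
    at hcard
  refine ⟨_, csgMove_filter_lt_level (c := p + 1) hs hc (by omega) (by omega), ?_⟩
  rw [toStarPos, if_neg hcu, card_filter_lt_level hS (by omega)]
  congr 1
  omega

lemma exists_csgMove_single (hs : ConnOn (graph t k) ↑s) (hc : center ∈ s) {a : ℕ}
    (ha : leafCount s = a + 1) (hN : a + 1 + tailCount s ≤ N) :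
    ∃ u, CsgMove (graph t k) (Set.Icc 1 N) s u ∧ toStarPos u = .path 1 := by
  obtain ⟨v, hv, hv0⟩ := exists_level_eq_zero (s := s) (by omega)
  have hcard := card_eq_leafCount_add_tailCount s
  rw [if_pos hc] at hcard
  have hcv : center ∉ ({v} : Finset (Vertex t k)) := by
    rw [Finset.mem_singleton]
    rintro rfl
    simp at hv0
  refine ⟨{v}, csgMove_of_connOn (Finset.singleton_subset_iff.2 hv)
    (by rw [Finset.sdiff_singleton_eq_erase, Finset.card_erase_of_mem hv]; omega)
    (by rw [Finset.sdiff_singleton_eq_erase]; exact connOn_erase hs hc hv0)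
    (Or.inr (by rw [Finset.coe_singleton]; exact connOn_singleton v)), ?_⟩
  rw [toStarPos, if_neg hcv, Finset.card_singleton]

lemma exists_csgMove_path (hs : ConnOn (graph t k) ↑s) (hc : center ∉ s) {r : ℕ} (hr : 1 ≤ r)
    (hrN : r ≤ N) (hrs : r ≤ #s) :
    ∃ u, CsgMove (graph t k) (Set.Icc 1 N) s u ∧ toStarPos u = .path (#s - r) := by
  rcases eq_singleton_or_leafCount_eq_zero (Or.inr hs) hc with ⟨v, -, rfl⟩ | h0
  · rw [Finset.card_singleton] at hrs ⊢
    refine ⟨∅, csgMove_of_connOn (Finset.empty_subset _) (by simp; omega)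
      (by rw [Finset.sdiff_empty, Finset.coe_singleton]; exact connOn_singleton v)
      (Or.inl rfl), ?_⟩
    rw [toStarPos, if_neg (Finset.notMem_empty _), Finset.card_empty]
    congr 1
    omega
  obtain ⟨lo, hi, hS⟩ := image_level_eq_Icc hs
  have hleaf := Finset.filter_eq_empty_iff.1 (Finset.card_eq_zero.1 h0)
  have hcard_s : #s = hi - (lo - 1) := by
    rw [← card_filter_lt_level hS (by omega), Finset.filter_true_of_mem fun v hv => ?_]
    have := (Finset.mem_Icc.1 (hS ▸ Finset.mem_image_of_mem level hv)).1
    have := hleaf hv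
    omega
  have hcard : #(s.filter (hi - r < level ·)) = r := by
    rw [card_filter_lt_level hS (by omega)]
    omega
  have hcu : center ∉ s.filter (level · ≤ hi - r) := fun h => hc (Finset.mem_filter.1 h).1
  have hsplit := Finset.card_filter_add_card_filter_not (s := s) (level · ≤ hi - r)
  refine ⟨_, csgMove_filter_level_le (c := hi - r) hs (absurd · hc) (Finset.card_pos.1 (by omega))
    (by omega), ?_⟩
  rw [toStarPos, if_neg hcu]
  simp only [not_le] at hsplit
  congr 1
  omega

lemma exists_csgMove_of_move (hs : ConnOn (graph t k) ↑s) {τ : StarPos}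
    (hτ : StarPos.Move N (toStarPos s) τ) :
    ∃ u, CsgMove (graph t k) (Set.Icc 1 N) s u ∧ toStarPos u = τ := by
  unfold toStarPos at hτ
  split_ifs at hτ with hc
  · generalize ha : leafCount s = a at hτ
    generalize hj : tailCount s = j at hτ
    cases hτ with
    | tail a j r hr hrN hrj =>
      subst ha hj
      exact exists_csgMove_tail hs hc hr hrN hrj
    | leaf a j hN =>
      subst hj
      exact exists_csgMove_leaf hs hc ha hN
    | clear a j p hp hpN =>
      subst ha hj
      exact exists_csgMove_clear hs hc hp hpN
    | single a j hN =>
      subst hj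
      exact exists_csgMove_single hs hc ha hN
  · generalize hm : #s = m at hτ
    cases hτ with
    | path m r hr hrN hrm =>
      subst hm
      exact exists_csgMove_path hs hc hr hrN hrm

lemma csgGrundy_eq_grundy_toStarPos (s : Finset (Vertex t k))
    (hs : s = ∅ ∨ ConnOn (graph t k) ↑s) :
    csgGrundy (graph t k) (Set.Icc 1 N) s = StarPos.grundy N (toStarPos s) := by
  induction hn : #s using Nat.strong_induction_on generalizing s with
  | _ n ih =>
  have ih' : ∀ u, CsgMove (graph t k) (Set.Icc 1 N) s u →
      csgGrundy (graph t k) (Set.Icc 1 N) u = StarPos.grundy N (toStarPos u) :=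
    fun u hu => ih _ (hn ▸ card_lt_card_of_csgMove hu) u hu.2.2.2.2 rfl
  rw [csgGrundy_eq_mex, StarPos.grundy_eq_mex]
  congr 1
  ext g
  constructor
  · rintro ⟨u, hu, rfl⟩
    exact ⟨_, move_toStarPos hu, (ih' u hu).symm⟩
  · rintro ⟨τ, hτ, rfl⟩
    rcases hs with rfl | hs
    · rw [toStarPos, if_neg (Finset.notMem_empty _), Finset.card_empty] at hτ
      cases hτ
      omega
    obtain ⟨u, hu, rfl⟩ := exists_csgMove_of_move hs hτ
    exact ⟨u, hu, ih' u hu⟩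

lemma connOn_univ : ConnOn (graph t k) ↑(Finset.univ : Finset (Vertex t k)) := by
  refine connOn_of_ordConnected Finset.univ_nonempty ⟨?_⟩ fun _ _ _ => Or.inr (Finset.mem_univ _)
  rintro _ ⟨x, -, rfl⟩ _ ⟨z, -, rfl⟩ m ⟨hxm, hmz⟩
  match m with
  | 0 => exact ⟨x, Finset.mem_coe.2 (Finset.mem_univ x), by omega⟩
  | 1 => exact ⟨center, Finset.mem_coe.2 (Finset.mem_univ _), rfl⟩
  | m + 2 =>
    have hmk : m < k := by
      rcases z with (_ | _) | z <;> simp only [level] at hmz <;> omega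
    exact ⟨.inr ⟨m, hmk⟩, Finset.mem_coe.2 (Finset.mem_univ _), rfl⟩

lemma toStarPos_univ : toStarPos (Finset.univ : Finset (Vertex t k)) = .star t k := by
  have hleaf : Finset.univ.filter (level · = 0) =
      Finset.univ.image fun w => (.inl (some w) : Vertex t k) := by
    ext v
    simp only [Finset.mem_filter, Finset.mem_univ, true_and, Finset.mem_image]
    rcases v with (_ | _) | _ <;> simp [level]
  have htail :
      Finset.univ.filter (2 ≤ level ·) = Finset.univ.image (.inr : Fin k → Vertex t k) := by
    ext v
    simp only [Finset.mem_filter, Finset.mem_univ, true_and, Finset.mem_image]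
    rcases v with (_ | _) | _ <;> simp [level]
  rw [toStarPos, if_pos (Finset.mem_univ _), leafCount, tailCount, hleaf, htail,
    Finset.card_image_of_injective _ (fun _ _ h => by simpa using h),
    Finset.card_image_of_injective _ Sum.inr_injective]
  simp

lemma csgGrundy_univ :
    csgGrundy (graph t k) (Set.Icc 1 N) Finset.univ = StarPos.grundy N (.star t k) := by
  rw [csgGrundy_eq_grundy_toStarPos _ (Or.inr connOn_univ), toStarPos_univ]

end StarWithPath

theorem stmt8_general (N t : ℕ) (k : ℕ) :
    csgGrundy (appendPath (subdividedStar fun _ : Fin t => 1) none k)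
      (Set.Icc 1 N) Finset.univ =
    csgGrundy (appendPath (subdividedStar fun _ : Fin t => 1) none (k % (N + 1)))
      (Set.Icc 1 N) Finset.univ := by
  rw [StarWithPath.csgGrundy_univ, StarWithPath.csgGrundy_univ, StarPos.grundy_star_mod]

/-- For CSG({1,…,N}) with N ≥ 3 on the star with `t` leaves with a path of `k`
vertices appended at its center, the Grundy value only depends on k mod (N+1):
the Grundy sequence in `k` is purely periodic with period N+1. -/
theorem stmt8 (N t : ℕ) (hN : 3 ≤ N) (ht : 1 ≤ t) (k : ℕ) :
    csgGrundy (appendPath (subdividedStar fun _ : Fin t => 1) none k)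
      (Set.Icc 1 N) Finset.univ =
    csgGrundy (appendPath (subdividedStar fun _ : Fin t => 1) none (k % (N + 1)))
      (Set.Icc 1 N) Finset.univ :=
  stmt8_general N t k
end

section
/- For the game CSG({1,...,N}) with N ≥ 3, the Grundy value of the star S(1^t) (central vertex with t ≥ 1 leaves) is: 2 if t ≤ N−1 and t is odd; 3 if t ≤ N−1 and t is even; 0 if t = N+i with i ≥ 0 even; and 1 if t = N+i with i ≥ 0 odd. -/
open SimpleGraph

abbrev Leaf (t : ℕ) := Σ i : Fin t, Fin 1

variable {t : ℕ}

lemma star_adj {a b : Option (Leaf t)} :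
    (subdividedStar fun _ : Fin t => 1).Adj a b ↔ a ≠ b ∧ (a = none ∨ b = none) := by
  cases a <;> cases b <;>
    simp [subdividedStar, SimpleGraph.fromRel_adj]

lemma conn_of_none_mem {s : Set (Option (Leaf t))} (h : none ∈ s) :
    ConnOn (subdividedStar fun _ : Fin t => 1) s := by
  rw [ConnOn, SimpleGraph.connected_iff]
  refine ⟨?_, ⟨⟨none, h⟩⟩⟩
  intro x y
  have key : ∀ z : s, ((subdividedStar fun _ : Fin t => 1).induce s).Reachable z ⟨none, h⟩ := by
    rintro ⟨z, hz⟩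
    rcases z with _ | p
    · exact SimpleGraph.Reachable.refl _
    · exact SimpleGraph.Adj.reachable (by simp [SimpleGraph.comap_adj, star_adj])
  exact (key x).trans (key y).symm

lemma subsingleton_of_conn_of_none_notMem {s : Set (Option (Leaf t))}
    (hc : ConnOn (subdividedStar fun _ : Fin t => 1) s) (h : none ∉ s) :
    ∃ v, s = {v} := by
  obtain ⟨⟨v, hv⟩⟩ := hc.nonempty
  refine ⟨v, Set.eq_singleton_iff_unique_mem.2 ⟨hv, fun w hw => ?_⟩⟩
  obtain ⟨p⟩ := hc.preconnected ⟨w, hw⟩ ⟨v, hv⟩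
  cases p with
  | nil => rfl
  | @cons _ b _ ha _ =>
    rw [SimpleGraph.comap_adj, star_adj] at ha
    rcases ha.2 with h1 | h1
    · exact absurd (h1 ▸ hw) h
    · exact absurd (h1 ▸ b.2) h

lemma conn_singleton (v : Option (Leaf t)) :
    ConnOn (subdividedStar fun _ : Fin t => 1) {v} := by
  rw [ConnOn, SimpleGraph.connected_iff]
  refine ⟨?_, ⟨⟨v, rfl⟩⟩⟩
  intro x y
  have : x = y := Subtype.ext (by rw [x.2, y.2])
  exact this ▸ SimpleGraph.Reachable.refl _
lemma mex_eq_s9 {s : Set ℕ} {a : ℕ} (ha : a ∉ s) (h : ∀ b < a, b ∈ s) : mex s = a := by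
  unfold mex
  refine le_antisymm (Nat.sInf_le ha) (le_csInf ⟨a, ha⟩ ?_)
  intro m hm
  by_contra hlt
  push_neg at hlt
  exact hm (h m hlt)

lemma grundy_range {V : Type*} [DecidableEq V] (G : SimpleGraph V) (L : Set ℕ) (s : Finset V) :
    csgGrundy G L s = mex {n | ∃ u, CsgMove G L s u ∧ csgGrundy G L u = n} := by
  rw [csgGrundy]
  congr 1
  ext n
  simp [Set.range, Subtype.exists]

lemma csgGrundy_empty {V : Type*} [DecidableEq V] (G : SimpleGraph V) (L : Set ℕ) :
    csgGrundy G L (∅ : Finset V) = 0 := by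
  rw [grundy_range]
  have : ∀ u, ¬ CsgMove G L (∅ : Finset V) u := by
    rintro u ⟨h1, h2, -⟩
    simp [Finset.subset_empty.1 h1] at h2
  refine mex_eq_s9 ?_ (by omega)
  rintro ⟨u, hu, -⟩
  exact this u hu
def P {t : ℕ} (A : Finset (Leaf t)) : Finset (Option (Leaf t)) :=
  insert none (A.image some)

lemma mem_P {A : Finset (Leaf t)} {v : Option (Leaf t)} :
    v ∈ P A ↔ v = none ∨ ∃ a ∈ A, v = some a := by
  simp [P, eq_comm]

lemma none_mem_P {A : Finset (Leaf t)} : (none : Option (Leaf t)) ∈ P A := by simp [P]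

lemma card_P {A : Finset (Leaf t)} : (P A).card = A.card + 1 := by
  rw [P, Finset.card_insert_of_notMem (by simp),
    Finset.card_image_of_injective _ (Option.some_injective _)]

lemma P_sdiff_singleton {A : Finset (Leaf t)} {a : Leaf t} (ha : a ∈ A) :
    P A \ {some a} = P (A.erase a) := by
  ext v
  rcases v with _ | p <;> simp [mem_P, Finset.mem_sdiff] <;> aesop

lemma sdiff_P_erase {A : Finset (Leaf t)} {a : Leaf t} (ha : a ∈ A) :
    P A \ P (A.erase a) = {some a} := by
  ext v
  rcases v with _ | p <;> simp [mem_P, Finset.mem_sdiff] <;> aesop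
lemma move_iff {N : ℕ} (hN : 3 ≤ N) {A : Finset (Leaf t)} {u : Finset (Option (Leaf t))} :
    CsgMove (subdividedStar fun _ : Fin t => 1) (Set.Icc 1 N) (P A) u ↔
      (∃ a ∈ A, u = P (A.erase a)) ∨
      (∃ a ∈ A, A.card ≤ N ∧ u = {some a}) ∨
      (u = ∅ ∧ A.card + 1 ≤ N) := by
  constructor
  · rintro ⟨hsub, hne, hcard, hconn, hrem⟩
    by_cases hn : none ∈ u
    · -- the removed set does not contain the center, so it is a singleton leaf
      have hnot : (none : Option (Leaf t)) ∉ ((P A \ u : Finset _) : Set _) := by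
        simp [hn]
      obtain ⟨v, hv⟩ := subsingleton_of_conn_of_none_notMem hconn hnot
      have hvmem : v ∈ P A \ u := by
        rw [← Finset.mem_coe, hv]; rfl
      rcases v with _ | a
      · exact absurd (by rw [hv]; rfl) hnot
      have haA : a ∈ A := by
        have := (Finset.mem_sdiff.1 hvmem).1
        rcases mem_P.1 this with h | ⟨b, hb, hb2⟩
        · exact absurd h (by simp)
        · exact (Option.some_injective _ hb2).symm ▸ hb
      have hsd : P A \ u = {some a} := Finset.coe_injective (by rw [hv]; simp)
      left
      refine ⟨a, haA, ?_⟩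
      rw [← Finset.sdiff_sdiff_eq_self hsub, hsd, P_sdiff_singleton haA]
    · rcases hrem with rfl | hconnu
      · refine Or.inr (Or.inr ⟨rfl, ?_⟩)
        have := hcard.2
        rwa [Finset.sdiff_empty, card_P] at this
      · obtain ⟨v, hv⟩ := subsingleton_of_conn_of_none_notMem hconnu (by simpa using hn)
        have hvmem : v ∈ u := by rw [← Finset.mem_coe, hv]; rfl
        rcases v with _ | a
        · exact absurd hvmem hn
        have haA : a ∈ A := by
          rcases mem_P.1 (hsub hvmem) with h | ⟨b, hb, hb2⟩
          · exact absurd h (by simp)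
          · exact (Option.some_injective _ hb2).symm ▸ hb
        have hu : u = {some a} := Finset.coe_injective (by rw [hv]; simp)
        refine Or.inr (Or.inl ⟨a, haA, ?_, hu⟩)
        have := hcard.2
        rwa [hu, P_sdiff_singleton haA, card_P, Finset.card_erase_of_mem haA,
          Nat.sub_add_cancel (Finset.card_pos.2 ⟨a, haA⟩)] at this
  · rintro (⟨a, ha, rfl⟩ | ⟨a, ha, hcard, rfl⟩ | ⟨rfl, hcard⟩)
    · refine ⟨fun v hv => ?_, ?_, ?_, ?_, Or.inr (conn_of_none_mem (by simp [none_mem_P]))⟩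
      · rcases mem_P.1 hv with h | ⟨b, hb, hb2⟩
        · exact h ▸ none_mem_P
        · exact mem_P.2 (Or.inr ⟨b, Finset.mem_of_mem_erase hb, hb2⟩)
      · rw [sdiff_P_erase ha]; exact ⟨some a, by simp⟩
      · rw [sdiff_P_erase ha]; simp; omega
      · rw [sdiff_P_erase ha, Finset.coe_singleton]; exact conn_singleton _
    · have hApos : 1 ≤ A.card := Finset.card_pos.2 ⟨a, ha⟩
      refine ⟨Finset.singleton_subset_iff.2 (mem_P.2 (Or.inr ⟨a, ha, rfl⟩)), ?_, ?_, ?_, Or.inr (by rw [Finset.coe_singleton]; exact conn_singleton _)⟩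
      · rw [P_sdiff_singleton ha]; exact ⟨none, none_mem_P⟩
      · rw [P_sdiff_singleton ha, card_P, Finset.card_erase_of_mem ha,
          Nat.sub_add_cancel hApos]
        exact ⟨hApos, hcard⟩
      · rw [P_sdiff_singleton ha]; exact conn_of_none_mem (by simp [none_mem_P])
    · refine ⟨Finset.empty_subset _, ?_, ?_, ?_, Or.inl rfl⟩
      · rw [Finset.sdiff_empty]; exact ⟨none, none_mem_P⟩
      · rw [Finset.sdiff_empty, card_P]; exact ⟨by omega, hcard⟩
      · rw [Finset.sdiff_empty]; exact conn_of_none_mem (by simp [none_mem_P])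
lemma csgGrundy_singleton {N : ℕ} (hN : 3 ≤ N) (v : Option (Leaf t)) :
    csgGrundy (subdividedStar fun _ : Fin t => 1) (Set.Icc 1 N) {v} = 1 := by
  rw [grundy_range]
  have hmove : ∀ u, CsgMove (subdividedStar fun _ : Fin t => 1) (Set.Icc 1 N)
      ({v} : Finset _) u ↔ u = ∅ := by
    intro u
    constructor
    · rintro ⟨hsub, hne, -⟩
      rcases Finset.subset_singleton_iff.1 hsub with rfl | rfl
      · rfl
      · simp at hne
    · rintro rfl
      refine ⟨by simp, ⟨v, by simp⟩, by simp; omega, ?_, Or.inl rfl⟩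
      rw [Finset.sdiff_empty, Finset.coe_singleton]
      exact conn_singleton _
  have hset : {n | ∃ u, CsgMove (subdividedStar fun _ : Fin t => 1) (Set.Icc 1 N)
      ({v} : Finset _) u ∧ csgGrundy (subdividedStar fun _ : Fin t => 1) (Set.Icc 1 N) u = n}
      = {0} := by
    ext n
    simp only [Set.mem_setOf_eq, Set.mem_singleton_iff]
    constructor
    · rintro ⟨u, hu, rfl⟩
      rw [(hmove u).1 hu, csgGrundy_empty]
    · rintro rfl
      exact ⟨∅, (hmove ∅).2 rfl, csgGrundy_empty _ _⟩
  rw [hset]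
  refine mex_eq_s9 (by simp) (fun b hb => by interval_cases b; simp)

/-- The Grundy value formula for stars. -/
def g (N k : ℕ) : ℕ :=
  if k = 0 then 1
  else if k ≤ N - 1 then (if k % 2 = 1 then 2 else 3)
  else if (k - N) % 2 = 0 then 0 else 1

lemma grundy_P {N : ℕ} (hN : 3 ≤ N) :
    ∀ k, ∀ A : Finset (Leaf t), A.card = k →
      csgGrundy (subdividedStar fun _ : Fin t => 1) (Set.Icc 1 N) (P A) = g N k := by
  intro k
  induction k using Nat.strong_induction_on with
  | _ k IH =>
  intro A hA
  rw [grundy_range]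
  rcases Nat.eq_zero_or_pos k with rfl | hk
  · have hAe : A = ∅ := Finset.card_eq_zero.1 hA
    subst hAe
    have hset : {n | ∃ u, CsgMove (subdividedStar fun _ : Fin t => 1) (Set.Icc 1 N)
        (P (∅ : Finset (Leaf t))) u ∧
        csgGrundy (subdividedStar fun _ : Fin t => 1) (Set.Icc 1 N) u = n} = {0} := by
      ext n
      simp only [Set.mem_setOf_eq, Set.mem_singleton_iff]
      constructor
      · rintro ⟨u, hu, rfl⟩
        rcases (move_iff hN).1 hu with ⟨a, ha, -⟩ | ⟨a, ha, -⟩ | ⟨rfl, -⟩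
        · simp at ha
        · simp at ha
        · rw [csgGrundy_empty]
      · rintro rfl
        exact ⟨∅, (move_iff hN).2 (Or.inr (Or.inr ⟨rfl, by simp; omega⟩)),
          csgGrundy_empty _ _⟩
    rw [hset, show g N 0 = 1 from rfl]
    exact mex_eq_s9 (by simp) (fun b hb => by interval_cases b; simp)
  · obtain ⟨a0, ha0⟩ := Finset.card_pos.1 (hA ▸ hk)
    have hIH : ∀ a ∈ A, csgGrundy (subdividedStar fun _ : Fin t => 1) (Set.Icc 1 N)
        (P (A.erase a)) = g N (k - 1) := by
      intro a ha
      exact IH (k - 1) (by omega) _ (by rw [Finset.card_erase_of_mem ha, hA])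
    have hset : {n | ∃ u, CsgMove (subdividedStar fun _ : Fin t => 1) (Set.Icc 1 N)
        (P A) u ∧ csgGrundy (subdividedStar fun _ : Fin t => 1) (Set.Icc 1 N) u = n}
        = {n | n = g N (k - 1) ∨ (k ≤ N ∧ n = 1) ∨ (k + 1 ≤ N ∧ n = 0)} := by
      ext n
      simp only [Set.mem_setOf_eq]
      constructor
      · rintro ⟨u, hu, rfl⟩
        rcases (move_iff hN).1 hu with ⟨a, ha, rfl⟩ | ⟨a, ha, hc, rfl⟩ | ⟨rfl, hc⟩
        · exact Or.inl (hIH a ha)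
        · exact Or.inr (Or.inl ⟨hA ▸ hc, csgGrundy_singleton hN _⟩)
        · exact Or.inr (Or.inr ⟨hA ▸ hc, csgGrundy_empty _ _⟩)
      · rintro (rfl | ⟨hkN, rfl⟩ | ⟨hkN, rfl⟩)
        · exact ⟨P (A.erase a0), (move_iff hN).2 (Or.inl ⟨a0, ha0, rfl⟩), hIH a0 ha0⟩
        · exact ⟨{some a0}, (move_iff hN).2 (Or.inr (Or.inl ⟨a0, ha0, hA ▸ hkN, rfl⟩)),
            csgGrundy_singleton hN _⟩
        · exact ⟨∅, (move_iff hN).2 (Or.inr (Or.inr ⟨rfl, hA ▸ hkN⟩)), csgGrundy_empty _ _⟩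
    rw [hset]
    rcases le_or_gt k (N - 1) with h1 | h1
    · -- k ≤ N - 1
      have hx : (k % 2 = 1 ∧ (g N (k-1) = 1 ∨ g N (k-1) = 3)) ∨
          (k % 2 = 0 ∧ g N (k-1) = 2) := by
        simp only [g]; split_ifs <;> omega
      by_cases hp : k % 2 = 1
      · have hgk : g N k = 2 := by simp only [g]; split_ifs <;> omega
        rw [hgk]
        refine mex_eq_s9 (by simp only [Set.mem_setOf_eq]; omega)
          (fun b hb => by simp only [Set.mem_setOf_eq]; omega)
      · have hgk : g N k = 3 := by simp only [g]; split_ifs <;> omega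
        rw [hgk]
        refine mex_eq_s9 (by simp only [Set.mem_setOf_eq]; omega)
          (fun b hb => by simp only [Set.mem_setOf_eq]; omega)
    · rcases le_or_gt k N with h2 | h2
      · -- k = N
        have hx : g N (k-1) = 2 ∨ g N (k-1) = 3 := by
          simp only [g]; split_ifs <;> omega
        have hgk : g N k = 0 := by simp only [g]; split_ifs <;> omega
        rw [hgk]
        refine mex_eq_s9 (by simp only [Set.mem_setOf_eq]; omega)
          (fun b hb => by simp only [Set.mem_setOf_eq]; omega)
      · -- k > N
        have hx : ((k - N) % 2 = 0 ∧ g N (k-1) = 1) ∨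
            ((k - N) % 2 = 1 ∧ g N (k-1) = 0) := by
          simp only [g]; split_ifs <;> omega
        by_cases hp : (k - N) % 2 = 0
        · have hgk : g N k = 0 := by simp only [g]; split_ifs <;> omega
          rw [hgk]
          refine mex_eq_s9 (by simp only [Set.mem_setOf_eq]; omega)
            (fun b hb => by simp only [Set.mem_setOf_eq]; omega)
        · have hgk : g N k = 1 := by simp only [g]; split_ifs <;> omega
          rw [hgk]
          refine mex_eq_s9 (by simp only [Set.mem_setOf_eq]; omega)
            (fun b hb => by simp only [Set.mem_setOf_eq]; omega)
/-- Grundy value of the star with `t` leaves for CSG({1,…,N}), N ≥ 3. -/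
theorem stmt9 (N t : ℕ) (hN : 3 ≤ N) (ht : 1 ≤ t) :
    csgGrundy (subdividedStar fun _ : Fin t => 1) (Set.Icc 1 N) Finset.univ =
      if t ≤ N - 1 then (if t % 2 = 1 then 2 else 3)
      else (if (t - N) % 2 = 0 then 0 else 1) := by
  have huniv : (Finset.univ : Finset (Option (Leaf t))) = P Finset.univ := by
    ext v
    rcases v with _ | p <;> simp [mem_P]
  have hcard : (Finset.univ : Finset (Leaf t)).card = t := by
    simp [Finset.card_univ]
  rw [huniv, grundy_P hN t _ hcard]
  simp only [g, if_neg (by omega : ¬ t = 0)]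
end
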